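/- Let 𝔽 be an equation in the u-variables (field F with shift S and total derivative D_t) and 𝔽̃ an equation in the ũ-variables (field F̃ with shift S̃ and total derivative D̃_t), both N-component. Let Φ = (Φ¹,…,Φ^N) with Φ^i ∈ F̃, and let φ be the substitution determined by φ(n) = n and φ(u^j_ℓ) = S̃^ℓ(Φ^j) for all j, ℓ (the K-algebra homomorphism on polynomials, extended to all fractions admitting a representation whose denominator has nonzero image). Assume: (i) Φ is a Miura-type transformation from 𝔽̃ to 𝔽, i.e., φ(𝔽^i) is defined and D̃_t(Φ^i) = φ(𝔽^i) for every i = 1,…,N; (ii) (M,U) is an MLR for 𝔽 such that φ is defined on every entry of M and U, and det φ(M) ≠ 0. Then (φ(M), φ(U)) (φ applied entrywise) is an MLR for 𝔽̃, i.e. D̃_t(φ(M)) = S̃(φ(U))·φ(M) − φ(M)·φ(U). -/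

import Mathlib

open MvPolynomial

/-- Variables: `none` is the variable `n`; `some (j, ℓ)` is the variable `u^j_ℓ`
(on the second copy of the field, `ũ^j_ℓ`). -/
abbrev Var (N : ℕ) := Option (Fin N × ℤ)

/-- The polynomial ring over `K` in the variables `n` and `u^j_ℓ`. -/
abbrev PolyF (K : Type) [Field K] (N : ℕ) := MvPolynomial (Var N) K

/-- The field of rational functions over `K` in the variables `n` and `u^j_ℓ`
(used both for `F` and for `F̃`). -/
abbrev FF (K : Type) [Field K] (N : ℕ) := FractionRing (PolyF K N)

/-- The image in the fraction field of the variable `v`. -/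
noncomputable def gen (K : Type) [Field K] (N : ℕ) (v : Var N) : FF K N :=
  algebraMap (PolyF K N) (FF K N) (X v)

/-- `f` depends only on `n` and the variables with `α ≤ ℓ ≤ β`. -/
def DependsOnly (K : Type) [Field K] (N : ℕ) (α β : ℤ) (f : FF K N) : Prop :=
  f ∈ Subfield.closure (Set.range (algebraMap K (FF K N)) ∪ {gen K N none} ∪
    { x | ∃ (j : Fin N) (ℓ : ℤ), α ≤ ℓ ∧ ℓ ≤ β ∧ x = gen K N (some (j, ℓ)) })

/-- The total derivative `D_t(f) = Σ_{ℓ,ξ} S^ℓ(𝔽^ξ)·∂_{ξ,ℓ}(f)` associated with the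
right-hand side `𝔽 : Fin N → F` (the sum over `ℓ ∈ ℤ` is finite, taken as `finsum`). -/
noncomputable def Dt (K : Type) [Field K] (N : ℕ) (S : FF K N ≃+* FF K N)
    (P : Fin N → ℤ → FF K N → FF K N) (Fv : Fin N → FF K N) (f : FF K N) : FF K N :=
  ∑ᶠ ℓ : ℤ, ∑ ξ : Fin N, (S ^ ℓ) (Fv ξ) * P ξ ℓ f

/-- The substitution homomorphism `φ` on polynomials, determined by `φ(n) = n` and
`φ(u^j_ℓ) = S̃^ℓ(Φ^j)`. -/
noncomputable def phi0 (K : Type) [Field K] (N : ℕ) (St : FF K N ≃+* FF K N)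
    (Φ : Fin N → FF K N) : PolyF K N →+* FF K N :=
  eval₂Hom ((algebraMap (PolyF K N) (FF K N)).comp (C : K →+* PolyF K N))
    (fun v : Var N =>
      match v with
      | none => gen K N none
      | some (j, ℓ) => (St ^ ℓ) (Φ j))


/-!
Every value of the substitution `φ` is computed from a representation `g / h` with
`φ h ≠ 0`, and the relation "`φ` sends `f` to `v`" is compatible with the field operations.
On the generators one checks that it is also compatible with the shifts `S`, `S̃` and with
the total derivatives: `D_t(u^j_ℓ) = S^ℓ(𝔽^j)` is sent to
`S̃^ℓ(φ(𝔽^j)) = S̃^ℓ(D̃_t Φ^j) = D̃_t(S̃^ℓ Φ^j) = D̃_t(φ(u^j_ℓ))`, by the Miura condition and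
because `D̃_t` commutes with `S̃`. Since `D_t` and `D̃_t` are derivations, this extends to
all `f`. Applying `φ` entrywise to `D_t(M) = S(U)·M − M·U` gives the claim.
-/

open Function

namespace Derivation

section OfLeibniz

variable {R A : Type*} [CommSemiring R] [CommRing A] [Algebra R A]

def ofLeibniz (D : A → A) (map_add : ∀ x y, D (x + y) = D x + D y)
    (leibniz : ∀ x y, D (x * y) = x * D y + D x * y)
    (map_algebraMap : ∀ c : R, D (algebraMap R A c) = 0) : Derivation R A A :=
  Derivation.mk'
    { toFun := D
      map_add' := map_add
      map_smul' := fun (c : R) x => by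
        rw [RingHom.id_apply, Algebra.smul_def, Algebra.smul_def, leibniz, map_algebraMap,
          zero_mul, add_zero] }
    fun x y => by
      rw [LinearMap.coe_mk, AddHom.coe_mk, leibniz, smul_eq_mul, smul_eq_mul, mul_comm (D x)]

@[simp]
lemma coe_ofLeibniz (D : A → A) (map_add) (leibniz) (map_algebraMap) :
    ⇑(ofLeibniz (R := R) D map_add leibniz map_algebraMap) = D := rfl

def conj (D : Derivation R A A) (e : A ≃+* A)
    (he : ∀ c : R, e (algebraMap R A c) = algebraMap R A c) : Derivation R A A :=
  ofLeibniz (fun x => e.symm (D (e x))) (fun x y => by simp)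
    (fun x y => by simp [mul_comm]) (fun c => by simp [he])

@[simp]
lemma conj_apply (D : Derivation R A A) (e : A ≃+* A) (he) (x : A) :
    D.conj e he x = e.symm (D (e x)) := rfl

end OfLeibniz

variable {ι R A M : Type*} [CommSemiring R] [CommSemiring A] [Algebra R A] [AddCommMonoid M]
  [Module A M] [Module R M]

@[simp]
lemma sum_apply (s : Finset ι) (D : ι → Derivation R A M) (a : A) :
    (∑ i ∈ s, D i) a = ∑ i ∈ s, D i a := by
  rw [← Finset.sum_apply a s (fun i => ⇑(D i))]
  exact congrFun (map_sum coeFnAddMonoidHom D s) a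

noncomputable def finsum (D : ι → Derivation R A M)
    (hD : ∀ a, HasFiniteSupport fun i => D i a) : Derivation R A M where
  toFun a := ∑ᶠ i, D i a
  map_add' a b := by simp only [map_add]; exact finsum_add_distrib (hD a) (hD b)
  map_smul' r a := by simp only [map_smul, RingHom.id_apply]; exact (smul_finsum' r (hD a)).symm
  map_one_eq_zero' := by simp
  leibniz' a b := by
    simp only [leibniz, LinearMap.coe_mk, AddHom.coe_mk]
    rw [finsum_add_distrib (f := fun i => a • D i b) (g := fun i => b • D i a)
      ((hD b).subset (support_const_smul_subset a _))
      ((hD a).subset (support_const_smul_subset b _)),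
      smul_finsum' _ (hD b), smul_finsum' _ (hD a)]

lemma finsum_apply (D : ι → Derivation R A M) (hD) (a : A) :
    finsum D hD a = ∑ᶠ i, D i a := rfl

end Derivation

section FracMapsTo

variable {A F L : Type*} [CommRing A] [Field F] [Algebra A F] [Field L]

/-- The graph of the partial extension of `φ : A →+* L` to fractions of `A`. -/
def FracMapsTo (φ : A →+* L) (f : F) (v : L) : Prop :=
  ∃ g h : A, φ h ≠ 0 ∧ f = algebraMap A F g / algebraMap A F h ∧ v = φ g / φ h

namespace FracMapsTo

variable {φ : A →+* L} {f f₁ f₂ : F} {v v₁ v₂ : L}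

lemma algebraMap_ne_zero [IsFractionRing A F] {h : A} (hh : φ h ≠ 0) :
    algebraMap A F h ≠ 0 := by
  rintro h0
  rw [← map_zero (algebraMap A F), (IsFractionRing.injective A F).eq_iff] at h0
  exact hh (by rw [h0, map_zero])

lemma of_algebraMap (g : A) : FracMapsTo φ (algebraMap A F g) (φ g) :=
  ⟨g, 1, by simp, by simp, by simp⟩

lemma intCast (n : ℤ) : FracMapsTo φ (n : F) (n : L) := by
  simpa using of_algebraMap (F := F) (φ := φ) (n : A)

lemma zero : FracMapsTo φ (0 : F) 0 := by
  simpa using intCast (F := F) (φ := φ) 0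

lemma unique [IsFractionRing A F] (h₁ : FracMapsTo φ f v₁) (h₂ : FracMapsTo φ f v₂) :
    v₁ = v₂ := by
  obtain ⟨g₁, h₁, hh₁, rfl, rfl⟩ := h₁
  obtain ⟨g₂, h₂, hh₂, hf, rfl⟩ := h₂
  rw [div_eq_div_iff (algebraMap_ne_zero hh₁) (algebraMap_ne_zero hh₂), ← map_mul,
    ← map_mul, (IsFractionRing.injective A F).eq_iff] at hf
  rw [div_eq_div_iff hh₁ hh₂, ← map_mul, ← map_mul, hf]

lemma mul (h₁ : FracMapsTo φ f₁ v₁) (h₂ : FracMapsTo φ f₂ v₂) :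
    FracMapsTo φ (f₁ * f₂) (v₁ * v₂) := by
  obtain ⟨g₁, h₁, hh₁, rfl, rfl⟩ := h₁
  obtain ⟨g₂, h₂, hh₂, rfl, rfl⟩ := h₂
  exact ⟨g₁ * g₂, h₁ * h₂, by simp [hh₁, hh₂], by simp [div_mul_div_comm],
    by simp [div_mul_div_comm]⟩

lemma add [IsFractionRing A F] (h₁ : FracMapsTo φ f₁ v₁) (h₂ : FracMapsTo φ f₂ v₂) :
    FracMapsTo φ (f₁ + f₂) (v₁ + v₂) := by
  obtain ⟨g₁, h₁, hh₁, rfl, rfl⟩ := h₁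
  obtain ⟨g₂, h₂, hh₂, rfl, rfl⟩ := h₂
  refine ⟨g₁ * h₂ + h₁ * g₂, h₁ * h₂, by simp [hh₁, hh₂], ?_, ?_⟩
  · simp [div_add_div _ _ (algebraMap_ne_zero hh₁) (algebraMap_ne_zero hh₂)]
  · simp [div_add_div _ _ hh₁ hh₂]

lemma neg (h : FracMapsTo φ f v) : FracMapsTo φ (-f) (-v) := by
  simpa using (intCast (-1)).mul h

lemma sub [IsFractionRing A F] (h₁ : FracMapsTo φ f₁ v₁) (h₂ : FracMapsTo φ f₂ v₂) :
    FracMapsTo φ (f₁ - f₂) (v₁ - v₂) := by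
  simpa [sub_eq_add_neg] using h₁.add h₂.neg

lemma inv (h : FracMapsTo φ f v) (hv : v ≠ 0) : FracMapsTo φ f⁻¹ v⁻¹ := by
  obtain ⟨g, h, hh, rfl, rfl⟩ := h
  exact ⟨h, g, left_ne_zero_of_mul (by simpa using hv), by rw [inv_div], by rw [inv_div]⟩

lemma div (h₁ : FracMapsTo φ f₁ v₁) (h₂ : FracMapsTo φ f₂ v₂) (hv₂ : v₂ ≠ 0) :
    FracMapsTo φ (f₁ / f₂) (v₁ / v₂) := by
  simpa [div_eq_mul_inv] using h₁.mul (h₂.inv hv₂)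

lemma pow (h : FracMapsTo φ f v) (n : ℕ) : FracMapsTo φ (f ^ n) (v ^ n) := by
  induction n with
  | zero => simpa using of_algebraMap (F := F) (φ := φ) 1
  | succ n ih => simpa [pow_succ] using ih.mul h

lemma sum [IsFractionRing A F] {ι : Type*} {s : Finset ι} {f : ι → F} {v : ι → L}
    (h : ∀ i ∈ s, FracMapsTo φ (f i) (v i)) :
    FracMapsTo φ (∑ i ∈ s, f i) (∑ i ∈ s, v i) := by
  classical
  induction s using Finset.induction_on with
  | empty => simpa using zero
  | insert i s hi ih =>
    rw [Finset.sum_insert hi, Finset.sum_insert hi]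
    exact (h i (s.mem_insert_self i)).add (ih fun j hj => h j (Finset.mem_insert_of_mem hj))

lemma matrix_mul [IsFractionRing A F] {m n p : Type*} [Fintype n] {M : Matrix m n F}
    {M' : Matrix m n L} {U : Matrix n p F} {U' : Matrix n p L}
    (hM : ∀ i j, FracMapsTo φ (M i j) (M' i j)) (hU : ∀ j k, FracMapsTo φ (U j k) (U' j k))
    (i : m) (k : p) : FracMapsTo φ ((M * U) i k) ((M' * U') i k) :=
  sum fun j _ => (hM i j).mul (hU j k)

lemma map {σ : F →+* F} {τ : L →+* L}
    (hσ : ∀ g, FracMapsTo φ (σ (algebraMap A F g)) (τ (φ g))) (h : FracMapsTo φ f v) :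
    FracMapsTo φ (σ f) (τ v) := by
  obtain ⟨g, h, hh, rfl, rfl⟩ := h
  rw [map_div₀, map_div₀]
  exact (hσ g).div (hσ h) ((map_ne_zero τ).2 hh)

lemma derivation [IsFractionRing A F] {R : Type*} [CommRing R] [Algebra R F] [Algebra R L]
    {D : Derivation R F F} {D' : Derivation R L L}
    (hD : ∀ g, FracMapsTo φ (D (algebraMap A F g)) (D' (φ g))) (h : FracMapsTo φ f v) :
    FracMapsTo φ (D f) (D' v) := by
  obtain ⟨g, h, hh, rfl, rfl⟩ := h
  rw [Derivation.leibniz_div, Derivation.leibniz_div]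
  exact (((of_algebraMap h).inv hh).pow 2).mul
    (((of_algebraMap h).mul (hD g)).sub ((of_algebraMap g).mul (hD h)))

end FracMapsTo

end FracMapsTo

namespace FracMapsTo

variable {V R F L : Type*} [CommRing R] [Field F] [Algebra (MvPolynomial V R) F]
  [IsFractionRing (MvPolynomial V R) F] [Field L] {φ : MvPolynomial V R →+* L} {f : F} {v : L}

lemma map_of_C_X {σ : F →+* F} {τ : L →+* L}
    (hC : ∀ c : R, FracMapsTo φ (σ (algebraMap (MvPolynomial V R) F (C c))) (τ (φ (C c))))
    (hX : ∀ x : V, FracMapsTo φ (σ (algebraMap (MvPolynomial V R) F (X x))) (τ (φ (X x))))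
    (h : FracMapsTo φ f v) : FracMapsTo φ (σ f) (τ v) := by
  refine map (fun g => ?_) h
  induction g using MvPolynomial.induction_on with
  | C c => exact hC c
  | add p q hp hq => simpa only [map_add] using hp.add hq
  | mul_X p x hp => simpa only [map_mul] using hp.mul (hX x)

lemma derivation_of_C_X {R' : Type*} [CommRing R'] [Algebra R' F] [Algebra R' L]
    {D : Derivation R' F F} {D' : Derivation R' L L}
    (hC : ∀ c : R, FracMapsTo φ (D (algebraMap (MvPolynomial V R) F (C c))) (D' (φ (C c))))
    (hX : ∀ x : V, FracMapsTo φ (D (algebraMap (MvPolynomial V R) F (X x))) (D' (φ (X x))))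
    (h : FracMapsTo φ f v) : FracMapsTo φ (D f) (D' v) := by
  refine derivation (fun g => ?_) h
  induction g using MvPolynomial.induction_on with
  | C c => exact hC c
  | add p q hp hq => simpa only [map_add] using hp.add hq
  | mul_X p x hp =>
    simpa only [map_mul, Derivation.leibniz, smul_eq_mul] using
      ((of_algebraMap p).mul (hX x)).add ((of_algebraMap (X x)).mul hp)

end FracMapsTo

section RationalFunctions

variable {K : Type} [Field K] {N : ℕ}

lemma algebraMap_C_eq (c : K) :
    algebraMap (PolyF K N) (FF K N) (C c) = algebraMap K (FF K N) c :=
  (IsScalarTower.algebraMap_apply K (PolyF K N) (FF K N) c).symm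

lemma algebraMap_X_eq (v : Var N) : algebraMap (PolyF K N) (FF K N) (X v) = gen K N v := rfl

lemma exists_finset_derivation_eq_zero (f : FF K N) :
    ∃ s : Finset (Var N), ∀ D : Derivation K (FF K N) (FF K N),
      (∀ v ∈ s, D (gen K N v) = 0) → D f = 0 := by
  obtain ⟨g, h, -, rfl⟩ := IsFractionRing.div_surjective (A := PolyF K N) f
  refine ⟨g.vars ∪ h.vars, fun D hD => ?_⟩
  have hpoly : ∀ p : PolyF K N, p.vars ⊆ g.vars ∪ h.vars → D (algebraMap _ _ p) = 0 :=
    fun p hp => derivation_eq_zero_of_forall_mem_vars (D := D.compAlgebraMap (PolyF K N))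
      fun v hv => hD v (hp hv)
  rw [Derivation.leibniz_div, hpoly g Finset.subset_union_left,
    hpoly h Finset.subset_union_right, smul_zero, smul_zero, sub_zero, smul_zero]

lemma derivation_ext_gen {D₁ D₂ : Derivation K (FF K N) (FF K N)}
    (h : ∀ v, D₁ (gen K N v) = D₂ (gen K N v)) : D₁ = D₂ := by
  ext f
  obtain ⟨s, hs⟩ := exists_finset_derivation_eq_zero f
  simpa [sub_eq_zero] using hs (D₁ - D₂) fun v _ => by simp [h v]

structure IsShift (S : FF K N ≃+* FF K N) : Prop where
  map_algebraMap : ∀ c : K, S (algebraMap K (FF K N) c) = algebraMap K (FF K N) c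
  map_gen_none : S (gen K N none) = gen K N none + 1
  map_gen_some : ∀ (j : Fin N) (ℓ : ℤ),
    S (gen K N (some (j, ℓ))) = gen K N (some (j, ℓ + 1))

namespace IsShift

variable {S : FF K N ≃+* FF K N}

lemma zpow_algebraMap (hS : IsShift S) (m : ℤ) (c : K) :
    (S ^ m) (algebraMap K (FF K N) c) = algebraMap K (FF K N) c := by
  have hinv : S⁻¹ (algebraMap K (FF K N) c) = algebraMap K (FF K N) c :=
    S.symm_apply_eq.2 (hS.map_algebraMap c).symm
  induction m using Int.induction_on with
  | zero => rfl
  | succ m ih => rw [zpow_add_one, RingAut.mul_apply, hS.map_algebraMap, ih]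
  | pred m ih => rw [zpow_sub_one, RingAut.mul_apply, hinv, ih]

lemma zpow_gen_none (hS : IsShift S) (m : ℤ) :
    (S ^ m) (gen K N none) = gen K N none + m := by
  have hinv : S⁻¹ (gen K N none) = gen K N none - 1 :=
    S.symm_apply_eq.2 (by rw [map_sub, map_one, hS.map_gen_none, add_sub_cancel_right])
  induction m using Int.induction_on with
  | zero => simp
  | succ m ih =>
    rw [zpow_add_one, RingAut.mul_apply, hS.map_gen_none, map_add, map_one, ih]
    push_cast; ring
  | pred m ih =>
    rw [zpow_sub_one, RingAut.mul_apply, hinv, map_sub, map_one, ih]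
    push_cast; ring

lemma zpow_gen_some (hS : IsShift S) (m : ℤ) (j : Fin N) (ℓ : ℤ) :
    (S ^ m) (gen K N (some (j, ℓ))) = gen K N (some (j, ℓ + m)) := by
  have hinv : ∀ ℓ, S⁻¹ (gen K N (some (j, ℓ))) = gen K N (some (j, ℓ - 1)) := fun ℓ =>
    S.symm_apply_eq.2 (by rw [hS.map_gen_some, sub_add_cancel])
  induction m using Int.induction_on generalizing ℓ with
  | zero => simp
  | succ m ih =>
    rw [zpow_add_one, RingAut.mul_apply, hS.map_gen_some, ih, add_right_comm, add_assoc]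
  | pred m ih =>
    rw [zpow_sub_one, RingAut.mul_apply, hinv, ih, sub_add_eq_add_sub, add_sub_assoc]

end IsShift

structure IsPartialDerivs (P : Fin N → ℤ → FF K N → FF K N) : Prop where
  map_add : ∀ j ℓ x y, P j ℓ (x + y) = P j ℓ x + P j ℓ y
  leibniz : ∀ j ℓ x y, P j ℓ (x * y) = x * P j ℓ y + P j ℓ x * y
  map_algebraMap : ∀ (j : Fin N) (ℓ : ℤ) (c : K), P j ℓ (algebraMap K (FF K N) c) = 0
  gen_none : ∀ (j : Fin N) (ℓ : ℤ), P j ℓ (gen K N none) = 0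
  gen_some : ∀ (j : Fin N) (ℓ : ℤ) (i : Fin N) (m : ℤ),
    P j ℓ (gen K N (some (i, m))) = if i = j ∧ m = ℓ then 1 else 0

namespace IsPartialDerivs

variable {P : Fin N → ℤ → FF K N → FF K N} (S : FF K N ≃+* FF K N) (Fv : Fin N → FF K N)

noncomputable def derivation (hP : IsPartialDerivs P) (j : Fin N) (ℓ : ℤ) :
    Derivation K (FF K N) (FF K N) :=
  Derivation.ofLeibniz (P j ℓ) (hP.map_add j ℓ) (hP.leibniz j ℓ) (hP.map_algebraMap j ℓ)

lemma hasFiniteSupport (hP : IsPartialDerivs P) (f : FF K N) (j : Fin N) :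
    HasFiniteSupport fun ℓ => P j ℓ f := by
  obtain ⟨s, hs⟩ := exists_finset_derivation_eq_zero f
  refine (s.finite_toSet.preimage (f := fun ℓ => some (j, ℓ)) (by simp [Set.InjOn])).subset ?_
  intro ℓ hℓ
  by_contra hjℓ
  refine hℓ (hs (hP.derivation j ℓ) fun v hv => ?_)
  rcases v with _ | ⟨i, m⟩
  · exact hP.gen_none j ℓ
  · refine (hP.gen_some j ℓ i m).trans (if_neg ?_)
    rintro ⟨rfl, rfl⟩
    exact hjℓ hv

noncomputable def totalDerivation (hP : IsPartialDerivs P) : Derivation K (FF K N) (FF K N) :=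
  Derivation.finsum (fun ℓ => ∑ ξ, (S ^ ℓ) (Fv ξ) • hP.derivation ξ ℓ) fun f => by
    simpa [derivation] using
      HasFiniteSupport.sum (fun ξ => (hP.hasFiniteSupport f ξ).mul_right _) Finset.univ

lemma coe_totalDerivation (hP : IsPartialDerivs P) :
    ⇑(hP.totalDerivation S Fv) = Dt K N S P Fv := by
  ext f
  simp [totalDerivation, Derivation.finsum_apply, derivation, Dt]

lemma Dt_gen_none (hP : IsPartialDerivs P) : Dt K N S P Fv (gen K N none) = 0 := by
  simp [Dt, hP.gen_none]

lemma Dt_gen_some (hP : IsPartialDerivs P) (j : Fin N) (m : ℤ) :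
    Dt K N S P Fv (gen K N (some (j, m))) = (S ^ m) (Fv j) := by
  rw [Dt, finsum_eq_single _ m fun ℓ hℓ => by simp [hP.gen_some, Ne.symm hℓ]]
  simp [hP.gen_some]

end IsPartialDerivs

lemma IsShift.Dt_zpow_comm {S : FF K N ≃+* FF K N} (hS : IsShift S)
    {P : Fin N → ℤ → FF K N → FF K N} (hP : IsPartialDerivs P) (Fv : Fin N → FF K N)
    (m : ℤ) (x : FF K N) : Dt K N S P Fv ((S ^ m) x) = (S ^ m) (Dt K N S P Fv x) := by
  set D := hP.totalDerivation S Fv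
  have hconj : D.conj (S ^ m) (hS.zpow_algebraMap m) = D := by
    refine derivation_ext_gen fun v => ?_
    rcases v with _ | ⟨j, ℓ⟩
    · rw [Derivation.conj_apply, hS.zpow_gen_none, map_add, D.map_intCast, add_zero,
        hP.coe_totalDerivation, hP.Dt_gen_none, map_zero]
    · rw [Derivation.conj_apply, hS.zpow_gen_some, hP.coe_totalDerivation, hP.Dt_gen_some,
        hP.Dt_gen_some, add_comm, zpow_add, RingAut.mul_apply, RingEquiv.symm_apply_apply]
  have := congrArg (S ^ m) (DFunLike.congr_fun hconj x)
  rwa [Derivation.conj_apply, RingEquiv.apply_symm_apply, hP.coe_totalDerivation] at this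

section Substitution

variable (St : FF K N ≃+* FF K N) (Φ : Fin N → FF K N)

@[simp]
lemma phi0_C (c : K) : phi0 K N St Φ (C c) = algebraMap K (FF K N) c := by
  simp [phi0, algebraMap_C_eq]

@[simp]
lemma phi0_X_none : phi0 K N St Φ (X none) = gen K N none := by
  simp [phi0]

@[simp]
lemma phi0_X_some (j : Fin N) (ℓ : ℤ) :
    phi0 K N St Φ (X (some (j, ℓ))) = (St ^ ℓ) (Φ j) := by
  simp [phi0]

variable {St Φ}

lemma IsShift.fracMapsTo_zpow {S : FF K N ≃+* FF K N} (hS : IsShift S) (hSt : IsShift St)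
    (m : ℤ) {f v : FF K N} (h : FracMapsTo (phi0 K N St Φ) f v) :
    FracMapsTo (phi0 K N St Φ) ((S ^ m) f) ((St ^ m) v) := by
  refine FracMapsTo.map_of_C_X (σ := (S ^ m).toRingHom) (τ := (St ^ m).toRingHom)
    (fun c => ?_) (fun x => ?_) h
  · simpa [algebraMap_C_eq, hS.zpow_algebraMap, hSt.zpow_algebraMap] using
      FracMapsTo.of_algebraMap (F := FF K N) (φ := phi0 K N St Φ) (C c)
  rcases x with _ | ⟨j, ℓ⟩
  · simpa [algebraMap_X_eq, hS.zpow_gen_none, hSt.zpow_gen_none] using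
      (FracMapsTo.of_algebraMap (F := FF K N) (φ := phi0 K N St Φ) (X none)).add
        (FracMapsTo.intCast m)
  · simpa [algebraMap_X_eq, hS.zpow_gen_some, ← RingAut.mul_apply, ← zpow_add, add_comm] using
      FracMapsTo.of_algebraMap (F := FF K N) (φ := phi0 K N St Φ) (X (some (j, ℓ + m)))

lemma fracMapsTo_Dt {S : FF K N ≃+* FF K N} (hS : IsShift S)
    {P : Fin N → ℤ → FF K N → FF K N} (hP : IsPartialDerivs P) (hSt : IsShift St)
    {Pt : Fin N → ℤ → FF K N → FF K N} (hPt : IsPartialDerivs Pt)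
    {Fv Ftv : Fin N → FF K N}
    (hFv : ∀ ξ, FracMapsTo (phi0 K N St Φ) (Fv ξ) (Dt K N St Pt Ftv (Φ ξ)))
    {f v : FF K N} (h : FracMapsTo (phi0 K N St Φ) f v) :
    FracMapsTo (phi0 K N St Φ) (Dt K N S P Fv f) (Dt K N St Pt Ftv v) := by
  rw [← hP.coe_totalDerivation, ← hPt.coe_totalDerivation]
  refine FracMapsTo.derivation_of_C_X (fun c => ?_) (fun x => ?_) h
  · simpa [algebraMap_C_eq] using FracMapsTo.zero
  rcases x with _ | ⟨j, ℓ⟩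
  · simpa [hP.coe_totalDerivation, hPt.coe_totalDerivation, algebraMap_X_eq, hP.Dt_gen_none,
      hPt.Dt_gen_none] using FracMapsTo.zero
  · simp only [hP.coe_totalDerivation, hPt.coe_totalDerivation, algebraMap_X_eq, phi0_X_some,
      hP.Dt_gen_some, hSt.Dt_zpow_comm hPt]
    exact hS.fracMapsTo_zpow hSt ℓ (hFv j)

end Substitution

end RationalFunctions

theorem stmt_10_general {d N : ℕ}
    (K : Type) [Field K]
    -- the shift S of F and the partial derivatives ∂_{j,ℓ} of F
    (S : FF K N ≃+* FF K N)
    (hSK : ∀ c : K, S (algebraMap K (FF K N) c) = algebraMap K (FF K N) c)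
    (hSn : S (gen K N none) = gen K N none + 1)
    (hSu : ∀ (j : Fin N) (ℓ : ℤ), S (gen K N (some (j, ℓ))) = gen K N (some (j, ℓ + 1)))
    (P : Fin N → ℤ → FF K N → FF K N)
    (hPadd : ∀ j ℓ x y, P j ℓ (x + y) = P j ℓ x + P j ℓ y)
    (hPmul : ∀ j ℓ x y, P j ℓ (x * y) = x * P j ℓ y + P j ℓ x * y)
    (hPK : ∀ (j : Fin N) (ℓ : ℤ) (c : K), P j ℓ (algebraMap K (FF K N) c) = 0)
    (hPn : ∀ (j : Fin N) (ℓ : ℤ), P j ℓ (gen K N none) = 0)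
    (hPu : ∀ (j : Fin N) (ℓ : ℤ) (i : Fin N) (m : ℤ),
      P j ℓ (gen K N (some (i, m))) = if i = j ∧ m = ℓ then 1 else 0)
    -- the shift S̃ of F̃ and the partial derivatives ∂̃_{j,ℓ} of F̃
    (St : FF K N ≃+* FF K N)
    (hStK : ∀ c : K, St (algebraMap K (FF K N) c) = algebraMap K (FF K N) c)
    (hStn : St (gen K N none) = gen K N none + 1)
    (hStu : ∀ (j : Fin N) (ℓ : ℤ), St (gen K N (some (j, ℓ))) = gen K N (some (j, ℓ + 1)))
    (Pt : Fin N → ℤ → FF K N → FF K N)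
    (hPtadd : ∀ j ℓ x y, Pt j ℓ (x + y) = Pt j ℓ x + Pt j ℓ y)
    (hPtmul : ∀ j ℓ x y, Pt j ℓ (x * y) = x * Pt j ℓ y + Pt j ℓ x * y)
    (hPtK : ∀ (j : Fin N) (ℓ : ℤ) (c : K), Pt j ℓ (algebraMap K (FF K N) c) = 0)
    (hPtn : ∀ (j : Fin N) (ℓ : ℤ), Pt j ℓ (gen K N none) = 0)
    (hPtu : ∀ (j : Fin N) (ℓ : ℤ) (i : Fin N) (m : ℤ),
      Pt j ℓ (gen K N (some (i, m))) = if i = j ∧ m = ℓ then 1 else 0)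
    -- the equations 𝔽 (in F) and 𝔽̃ (in F̃)
    (Fv : Fin N → FF K N)
    (Ftv : Fin N → FF K N)
    -- the Miura-type transformation Φ and the recorded values of φ on 𝔽, M, U
    (Φ : Fin N → FF K N)
    (phiF : Fin N → FF K N)
    (hphiF : ∀ i : Fin N, ∃ g h : PolyF K N, phi0 K N St Φ h ≠ 0 ∧
      Fv i = algebraMap (PolyF K N) (FF K N) g / algebraMap (PolyF K N) (FF K N) h ∧
      phiF i = phi0 K N St Φ g / phi0 K N St Φ h)
    (hMT : ∀ i : Fin N, Dt K N St Pt Ftv (Φ i) = phiF i)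
    (M U phiM phiU : Matrix (Fin d) (Fin d) (FF K N))
    (hLax : M.map (Dt K N S P Fv) = U.map ⇑S * M - M * U)
    (hphiM : ∀ r s : Fin d, ∃ g h : PolyF K N, phi0 K N St Φ h ≠ 0 ∧
      M r s = algebraMap (PolyF K N) (FF K N) g / algebraMap (PolyF K N) (FF K N) h ∧
      phiM r s = phi0 K N St Φ g / phi0 K N St Φ h)
    (hphiU : ∀ r s : Fin d, ∃ g h : PolyF K N, phi0 K N St Φ h ≠ 0 ∧
      U r s = algebraMap (PolyF K N) (FF K N) g / algebraMap (PolyF K N) (FF K N) h ∧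
      phiU r s = phi0 K N St Φ g / phi0 K N St Φ h) :
    phiM.map (Dt K N St Pt Ftv) = phiU.map ⇑St * phiM - phiM * phiU := by
  have hS : IsShift S := ⟨hSK, hSn, hSu⟩
  have hSt : IsShift St := ⟨hStK, hStn, hStu⟩
  have hP : IsPartialDerivs P := ⟨hPadd, hPmul, hPK, hPn, hPu⟩
  have hPt : IsPartialDerivs Pt := ⟨hPtadd, hPtmul, hPtK, hPtn, hPtu⟩
  have hFv : ∀ ξ, FracMapsTo (phi0 K N St Φ) (Fv ξ) (Dt K N St Pt Ftv (Φ ξ)) :=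
    fun ξ => hMT ξ ▸ hphiF ξ
  have hSU : ∀ r s, FracMapsTo (phi0 K N St Φ) (U.map S r s) (phiU.map St r s) :=
    fun r s => by simpa using hS.fracMapsTo_zpow hSt 1 (hphiU r s)
  ext r s
  refine (fracMapsTo_Dt hS hP hSt hPt hFv (hphiM r s)).unique ?_
  rw [← Matrix.map_apply (f := Dt K N S P Fv), hLax]
  exact (FracMapsTo.matrix_mul hSU hphiM r s).sub (FracMapsTo.matrix_mul hphiM hphiU r s)

/-- `F` (with shift `S`, partial derivatives `P`, equation `𝔽` and total derivative `D_t`) and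
`F̃` (with shift `S̃`, partial derivatives `P̃`, equation `𝔽̃` and total derivative `D̃_t`)
are two copies of the rational-function field; shifts and partial derivatives are
quantified by their characterizing properties.  `Φ = (Φ¹,…,Φ^N)` with `Φ^i ∈ F̃`, and
`φ` is the substitution with `φ(n) = n`, `φ(u^j_ℓ) = S̃^ℓ(Φ^j)` (the homomorphism `phi0`
on polynomials, extended to fractions whose denominator has nonzero image; the extended
values on `𝔽`, `M`, `U` are recorded by `phiF`, `phiM`, `phiU`).  Assume Φ is a
Miura-type transformation from `𝔽̃` to `𝔽` (i.e. `D̃_t(Φ^i) = φ(𝔽^i)`), `(M,U)` is an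
MLR for `𝔽`, `φ` is defined on every entry of `M`, `U`, and `det φ(M) ≠ 0`.  Then
`(φ(M), φ(U))` is an MLR for `𝔽̃`: `D̃_t(φ(M)) = S̃(φ(U))·φ(M) − φ(M)·φ(U)`. -/
theorem stmt_10 {d N : ℕ} (hd : 0 < d) (hN : 0 < N)
    (K : Type) [Field K] [CharZero K]
    -- the shift S of F and the partial derivatives ∂_{j,ℓ} of F
    (S : FF K N ≃+* FF K N)
    (hSK : ∀ c : K, S (algebraMap K (FF K N) c) = algebraMap K (FF K N) c)
    (hSn : S (gen K N none) = gen K N none + 1)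
    (hSu : ∀ (j : Fin N) (ℓ : ℤ), S (gen K N (some (j, ℓ))) = gen K N (some (j, ℓ + 1)))
    (P : Fin N → ℤ → FF K N → FF K N)
    (hPadd : ∀ j ℓ x y, P j ℓ (x + y) = P j ℓ x + P j ℓ y)
    (hPmul : ∀ j ℓ x y, P j ℓ (x * y) = x * P j ℓ y + P j ℓ x * y)
    (hPK : ∀ (j : Fin N) (ℓ : ℤ) (c : K), P j ℓ (algebraMap K (FF K N) c) = 0)
    (hPn : ∀ (j : Fin N) (ℓ : ℤ), P j ℓ (gen K N none) = 0)
    (hPu : ∀ (j : Fin N) (ℓ : ℤ) (i : Fin N) (m : ℤ),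
      P j ℓ (gen K N (some (i, m))) = if i = j ∧ m = ℓ then 1 else 0)
    -- the shift S̃ of F̃ and the partial derivatives ∂̃_{j,ℓ} of F̃
    (St : FF K N ≃+* FF K N)
    (hStK : ∀ c : K, St (algebraMap K (FF K N) c) = algebraMap K (FF K N) c)
    (hStn : St (gen K N none) = gen K N none + 1)
    (hStu : ∀ (j : Fin N) (ℓ : ℤ), St (gen K N (some (j, ℓ))) = gen K N (some (j, ℓ + 1)))
    (Pt : Fin N → ℤ → FF K N → FF K N)
    (hPtadd : ∀ j ℓ x y, Pt j ℓ (x + y) = Pt j ℓ x + Pt j ℓ y)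
    (hPtmul : ∀ j ℓ x y, Pt j ℓ (x * y) = x * Pt j ℓ y + Pt j ℓ x * y)
    (hPtK : ∀ (j : Fin N) (ℓ : ℤ) (c : K), Pt j ℓ (algebraMap K (FF K N) c) = 0)
    (hPtn : ∀ (j : Fin N) (ℓ : ℤ), Pt j ℓ (gen K N none) = 0)
    (hPtu : ∀ (j : Fin N) (ℓ : ℤ) (i : Fin N) (m : ℤ),
      Pt j ℓ (gen K N (some (i, m))) = if i = j ∧ m = ℓ then 1 else 0)
    -- the equations 𝔽 (in F) and 𝔽̃ (in F̃)
    (a b : ℤ) (hab : a ≤ b)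
    (Fv : Fin N → FF K N) (hFv : ∀ ξ, DependsOnly K N a b (Fv ξ))
    (at_ bt : ℤ) (hatbt : at_ ≤ bt)
    (Ftv : Fin N → FF K N) (hFtv : ∀ ξ, DependsOnly K N at_ bt (Ftv ξ))
    -- the Miura-type transformation Φ and the recorded values of φ on 𝔽, M, U
    (Φ : Fin N → FF K N)
    (phiF : Fin N → FF K N)
    (hphiF : ∀ i : Fin N, ∃ g h : PolyF K N, phi0 K N St Φ h ≠ 0 ∧
      Fv i = algebraMap (PolyF K N) (FF K N) g / algebraMap (PolyF K N) (FF K N) h ∧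
      phiF i = phi0 K N St Φ g / phi0 K N St Φ h)
    (hMT : ∀ i : Fin N, Dt K N St Pt Ftv (Φ i) = phiF i)
    (M U phiM phiU : Matrix (Fin d) (Fin d) (FF K N))
    (hMdet : M.det ≠ 0)
    (hLax : M.map (Dt K N S P Fv) = U.map ⇑S * M - M * U)
    (hphiM : ∀ r s : Fin d, ∃ g h : PolyF K N, phi0 K N St Φ h ≠ 0 ∧
      M r s = algebraMap (PolyF K N) (FF K N) g / algebraMap (PolyF K N) (FF K N) h ∧
      phiM r s = phi0 K N St Φ g / phi0 K N St Φ h)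
    (hphiU : ∀ r s : Fin d, ∃ g h : PolyF K N, phi0 K N St Φ h ≠ 0 ∧
      U r s = algebraMap (PolyF K N) (FF K N) g / algebraMap (PolyF K N) (FF K N) h ∧
      phiU r s = phi0 K N St Φ g / phi0 K N St Φ h)
    (hphiMdet : phiM.det ≠ 0) :
    phiM.map (Dt K N St Pt Ftv) = phiU.map ⇑St * phiM - phiM * phiU :=
  stmt_10_general K S hSK hSn hSu P hPadd hPmul hPK hPn hPu St hStK hStn hStu Pt hPtadd hPtmul hPtK
    hPtn hPtu Fv Ftv Φ phiF hphiF hMT M U phiM phiU hLax hphiM hphiU
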